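/- Let K_5^(3) be the signed complete graph on vertices {1,2,3,4,5} in which every pair of distinct vertices is joined by an edge, the two disjoint edges 12 and 34 have sign -1, and all other edges have sign +1. For every nonnegative integer k, the number of proper k-colorings of K_5^(3) equals 32k^5 - 80k^4 + 88k^3 - 48k^2 + 10k. -/
import Mathlib


/-- The edges of the complete graph on `5` vertices (vertices `1, …, 5` of the paper are
labelled `0, …, 4` here). -/
def completeEdges : List (Fin 5 × Fin 5) := [(0, 1), (0, 2), (0, 3), (0, 4), (1, 2), (1, 3), (1, 4), (2, 3), (2, 4), (3, 4)]

/-- The negative edges of the signed complete graph `K_5^(3)`; all other edges are positive. -/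
def negEdges : List (Fin 5 × Fin 5) := [(0, 1), (2, 3)]

/-- The sign of an edge of `K_5^(3)`. -/
def sign (e : Fin 5 × Fin 5) : ℤ := if e ∈ negEdges then -1 else 1


open Finset

def N (s : Finset ℤ) : ℤ := s.card

def F4 (s : Finset ℤ) (a b c d : ℤ) : ℤ :=
  ∑ e ∈ s, if a ≠ e ∧ b ≠ e ∧ c ≠ e ∧ d ≠ e then 1 else 0

def F3 (s : Finset ℤ) (a b c : ℤ) : ℤ :=
  ∑ d ∈ s, if c ≠ -d ∧ a ≠ d ∧ b ≠ d then F4 s a b c d else 0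

def F2 (s : Finset ℤ) (a b : ℤ) : ℤ :=
  ∑ c ∈ s, if a ≠ c ∧ b ≠ c then F3 s a b c else 0

def F1 (s : Finset ℤ) (a : ℤ) : ℤ :=
  ∑ b ∈ s, if a ≠ -b then F2 s a b else 0

def F0 (s : Finset ℤ) : ℤ := ∑ a ∈ s, F1 s a

lemma sum_split (s t : Finset ℤ) (f : ℤ → ℤ) (c : ℤ) (hts : t ⊆ s)
    (h : ∀ x ∈ s, x ∉ t → f x = c) :
    ∑ x ∈ s, f x = ∑ x ∈ t, f x + ((s.card : ℤ) - t.card) * c := by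
  rw [← Finset.sum_sdiff hts]
  have h1 : ∑ x ∈ s \ t, f x = ((s.card : ℤ) - t.card) * c := by
    rw [Finset.sum_congr rfl fun x hx =>
      h x (Finset.mem_sdiff.1 hx).1 (Finset.mem_sdiff.1 hx).2]
    rw [Finset.sum_const, Finset.card_sdiff_of_subset hts, nsmul_eq_mul,
      Nat.cast_sub (Finset.card_le_card hts)]
  rw [h1]; ring

lemma card3 {a b c : ℤ} (hab : a ≠ b) (hac : a ≠ c) (hbc : b ≠ c) :
    ({a, b, c} : Finset ℤ).card = 3 := by
  rw [Finset.card_insert_of_notMem (by simp [hab, hac]), Finset.card_pair hbc]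

lemma card4 {a b c d : ℤ} (hab : a ≠ b) (hac : a ≠ c) (had : a ≠ d)
    (hbc : b ≠ c) (hbd : b ≠ d) (hcd : c ≠ d) :
    ({a, b, c, d} : Finset ℤ).card = 4 := by
  rw [Finset.card_insert_of_notMem (by simp [hab, hac, had]), card3 hbc hbd hcd]

lemma F4_eq {s : Finset ℤ} {a b c d : ℤ} (ha : a ∈ s) (hb : b ∈ s) (hc : c ∈ s) (hd : d ∈ s) :
    F4 s a b c d = N s - (({a, b, c, d} : Finset ℤ).card : ℤ) := by
  have hsub : ({a, b, c, d} : Finset ℤ) ⊆ s := by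
    intro x hx
    simp only [Finset.mem_insert, Finset.mem_singleton] at hx
    rcases hx with rfl | rfl | rfl | rfl <;> assumption
  have hoff : ∀ x ∈ s, x ∉ ({a, b, c, d} : Finset ℤ) →
      (if a ≠ x ∧ b ≠ x ∧ c ≠ x ∧ d ≠ x then (1:ℤ) else 0) = 1 := by
    intro x _ hx
    simp only [Finset.mem_insert, Finset.mem_singleton, not_or] at hx
    obtain ⟨h1, h2, h3, h4⟩ := hx
    exact if_pos ⟨Ne.symm h1, Ne.symm h2, Ne.symm h3, Ne.symm h4⟩
  rw [F4, sum_split s _ _ 1 hsub hoff, Finset.sum_eq_zero, mul_one, zero_add, N]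
  intro x hx
  simp only [Finset.mem_insert, Finset.mem_singleton] at hx
  apply if_neg
  rcases hx with rfl | rfl | rfl | rfl <;> tauto

lemma D1 {s : Finset ℤ} {a : ℤ} (h0 : (0:ℤ) ∈ s) (ha : a ∈ s) (ha0 : a ≠ 0) :
    F3 s a a 0 = (N s - 2) * (N s - 3) := by
  have hsub : ({a, 0} : Finset ℤ) ⊆ s := by
    intro x hx
    simp only [Finset.mem_insert, Finset.mem_singleton] at hx
    rcases hx with rfl | rfl <;> assumption
  have hoff : ∀ x ∈ s, x ∉ ({a, 0} : Finset ℤ) →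
      (if (0:ℤ) ≠ -x ∧ a ≠ x ∧ a ≠ x then F4 s a a 0 x else 0) = N s - 3 := by
    intro x hxs hx
    simp only [Finset.mem_insert, Finset.mem_singleton, not_or] at hx
    obtain ⟨hx1, hx2⟩ := hx
    rw [if_pos (by omega), F4_eq ha ha h0 hxs,
      show ({a, a, 0, x} : Finset ℤ) = {a, 0, x} from by simp,
      card3 ha0 (by omega) (by omega)]
    norm_num
  rw [F3, sum_split s _ _ (N s - 3) hsub hoff,
    Finset.sum_insert (by simp [ha0]), Finset.sum_singleton,
    if_neg (by omega), if_neg (by omega), Finset.card_pair ha0]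
  push_cast [N]
  ring

lemma D2 {s : Finset ℤ} {a : ℤ} (hsym : ∀ x ∈ s, -x ∈ s) (ha : a ∈ s) (ha0 : a ≠ 0) :
    F3 s a a (-a) = (N s - 2) * (N s - 2) := by
  have hna : -a ∈ s := hsym a ha
  have hsub : ({a, -a} : Finset ℤ) ⊆ s := by
    intro x hx
    simp only [Finset.mem_insert, Finset.mem_singleton] at hx
    rcases hx with rfl | rfl <;> assumption
  have hoff : ∀ x ∈ s, x ∉ ({a, -a} : Finset ℤ) →
      (if -a ≠ -x ∧ a ≠ x ∧ a ≠ x then F4 s a a (-a) x else 0) = N s - 3 := by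
    intro x hxs hx
    simp only [Finset.mem_insert, Finset.mem_singleton, not_or] at hx
    obtain ⟨hx1, hx2⟩ := hx
    rw [if_pos (by omega), F4_eq ha ha hna hxs,
      show ({a, a, -a, x} : Finset ℤ) = {a, -a, x} from by
        ext y; simp only [Finset.mem_insert, Finset.mem_singleton]; tauto,
      card3 (by omega) (by omega) (by omega)]
    norm_num
  rw [F3, sum_split s _ _ (N s - 3) hsub hoff,
    Finset.sum_insert (by simp only [Finset.mem_singleton]; omega), Finset.sum_singleton,
    if_neg (by omega), if_pos (by omega), F4_eq ha ha hna hna,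
    show ({a, a, -a, -a} : Finset ℤ) = {a, -a} from by
      ext y; simp only [Finset.mem_insert, Finset.mem_singleton]; tauto,
    Finset.card_pair (by omega)]
  push_cast [N]
  ring

lemma D3 {s : Finset ℤ} {a c : ℤ} (hsym : ∀ x ∈ s, -x ∈ s) (ha : a ∈ s) (hc : c ∈ s)
    (ha0 : a ≠ 0) (hc0 : c ≠ 0) (hca : c ≠ a) (hcna : c ≠ -a) :
    F3 s a a c = (N s - 2) + (N s - 3) * (N s - 3) := by
  have hnc : -c ∈ s := hsym c hc
  have hsub : ({a, c, -c} : Finset ℤ) ⊆ s := by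
    intro x hx
    simp only [Finset.mem_insert, Finset.mem_singleton] at hx
    rcases hx with rfl | rfl | rfl <;> assumption
  have hoff : ∀ x ∈ s, x ∉ ({a, c, -c} : Finset ℤ) →
      (if c ≠ -x ∧ a ≠ x ∧ a ≠ x then F4 s a a c x else 0) = N s - 3 := by
    intro x hxs hx
    simp only [Finset.mem_insert, Finset.mem_singleton, not_or] at hx
    obtain ⟨hx1, hx2, hx3⟩ := hx
    rw [if_pos (by omega), F4_eq ha ha hc hxs,
      show ({a, a, c, x} : Finset ℤ) = {a, c, x} from by
        ext y; simp only [Finset.mem_insert, Finset.mem_singleton]; tauto,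
      card3 (by omega) (by omega) (by omega)]
    norm_num
  rw [F3, sum_split s _ _ (N s - 3) hsub hoff,
    Finset.sum_insert (by simp only [Finset.mem_insert, Finset.mem_singleton]; omega),
    Finset.sum_insert (by simp only [Finset.mem_singleton]; omega), Finset.sum_singleton,
    if_neg (by omega), if_pos (by omega), if_neg (by omega), F4_eq ha ha hc hc,
    show ({a, a, c, c} : Finset ℤ) = {a, c} from by
      ext y; simp only [Finset.mem_insert, Finset.mem_singleton]; tauto,
    Finset.card_pair (by omega), card3 (by omega) (by omega) (by omega)]
  push_cast [N]
  ring

lemma D4 {s : Finset ℤ} {x : ℤ} (hsym : ∀ y ∈ s, -y ∈ s) (h0 : (0:ℤ) ∈ s) (hx : x ∈ s)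
    (hx0 : x ≠ 0) :
    F3 s 0 x (-x) = (N s - 3) + (N s - 3) * (N s - 4) := by
  have hnx : -x ∈ s := hsym x hx
  have hsub : ({0, x, -x} : Finset ℤ) ⊆ s := by
    intro y hy
    simp only [Finset.mem_insert, Finset.mem_singleton] at hy
    rcases hy with rfl | rfl | rfl <;> assumption
  have hoff : ∀ d ∈ s, d ∉ ({0, x, -x} : Finset ℤ) →
      (if -x ≠ -d ∧ (0:ℤ) ≠ d ∧ x ≠ d then F4 s 0 x (-x) d else 0) = N s - 4 := by
    intro d hds hd
    simp only [Finset.mem_insert, Finset.mem_singleton, not_or] at hd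
    obtain ⟨hd1, hd2, hd3⟩ := hd
    rw [if_pos (by omega), F4_eq h0 hx hnx hds,
      card4 (by omega) (by omega) (by omega) (by omega) (by omega) (by omega)]
    norm_num
  rw [F3, sum_split s _ _ (N s - 4) hsub hoff,
    Finset.sum_insert (by simp only [Finset.mem_insert, Finset.mem_singleton]; omega),
    Finset.sum_insert (by simp only [Finset.mem_singleton]; omega), Finset.sum_singleton,
    if_neg (by omega), if_neg (by omega), if_pos (by omega), F4_eq h0 hx hnx hnx,
    show ({0, x, -x, -x} : Finset ℤ) = {0, x, -x} from by
      ext y; simp only [Finset.mem_insert, Finset.mem_singleton]; tauto,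
    card3 (by omega) (by omega) (by omega)]
  push_cast [N]
  ring

lemma D5 {s : Finset ℤ} {x c : ℤ} (hsym : ∀ y ∈ s, -y ∈ s) (h0 : (0:ℤ) ∈ s) (hx : x ∈ s)
    (hc : c ∈ s) (hx0 : x ≠ 0) (hc0 : c ≠ 0) (hcx : c ≠ x) (hcnx : c ≠ -x) :
    F3 s 0 x c = (N s - 3) + (N s - 4) * (N s - 4) := by
  have hnc : -c ∈ s := hsym c hc
  have hsub : ({0, x, c, -c} : Finset ℤ) ⊆ s := by
    intro y hy
    simp only [Finset.mem_insert, Finset.mem_singleton] at hy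
    rcases hy with rfl | rfl | rfl | rfl <;> assumption
  have hoff : ∀ d ∈ s, d ∉ ({0, x, c, -c} : Finset ℤ) →
      (if c ≠ -d ∧ (0:ℤ) ≠ d ∧ x ≠ d then F4 s 0 x c d else 0) = N s - 4 := by
    intro d hds hd
    simp only [Finset.mem_insert, Finset.mem_singleton, not_or] at hd
    obtain ⟨hd1, hd2, hd3, hd4⟩ := hd
    rw [if_pos (by omega), F4_eq h0 hx hc hds,
      card4 (by omega) (by omega) (by omega) (by omega) (by omega) (by omega)]
    norm_num
  rw [F3, sum_split s _ _ (N s - 4) hsub hoff,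
    Finset.sum_insert (by simp only [Finset.mem_insert, Finset.mem_singleton]; omega),
    Finset.sum_insert (by simp only [Finset.mem_insert, Finset.mem_singleton]; omega),
    Finset.sum_insert (by simp only [Finset.mem_singleton]; omega), Finset.sum_singleton,
    if_neg (by omega), if_neg (by omega), if_pos (by omega), if_neg (by omega),
    F4_eq h0 hx hc hc,
    show ({0, x, c, c} : Finset ℤ) = {0, x, c} from by
      ext y; simp only [Finset.mem_insert, Finset.mem_singleton]; tauto,
    card3 (by omega) (by omega) (by omega),
    card4 (by omega) (by omega) (by omega) (by omega) (by omega) (by omega)]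
  push_cast [N]
  ring

lemma D6 {s : Finset ℤ} {a b : ℤ} (h0 : (0:ℤ) ∈ s) (ha : a ∈ s) (hb : b ∈ s)
    (ha0 : a ≠ 0) (hb0 : b ≠ 0) (hab : a ≠ b) :
    F3 s a b 0 = (N s - 3) * (N s - 4) := by
  have hsub : ({a, b, 0} : Finset ℤ) ⊆ s := by
    intro y hy
    simp only [Finset.mem_insert, Finset.mem_singleton] at hy
    rcases hy with rfl | rfl | rfl <;> assumption
  have hoff : ∀ d ∈ s, d ∉ ({a, b, 0} : Finset ℤ) →
      (if (0:ℤ) ≠ -d ∧ a ≠ d ∧ b ≠ d then F4 s a b 0 d else 0) = N s - 4 := by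
    intro d hds hd
    simp only [Finset.mem_insert, Finset.mem_singleton, not_or] at hd
    obtain ⟨hd1, hd2, hd3⟩ := hd
    rw [if_pos (by omega), F4_eq ha hb h0 hds,
      card4 (by omega) (by omega) (by omega) (by omega) (by omega) (by omega)]
    norm_num
  rw [F3, sum_split s _ _ (N s - 4) hsub hoff,
    Finset.sum_insert (by simp only [Finset.mem_insert, Finset.mem_singleton]; omega),
    Finset.sum_insert (by simp only [Finset.mem_singleton]; omega), Finset.sum_singleton,
    if_neg (by omega), if_neg (by omega), if_neg (by omega),
    card3 (by omega) (by omega) (by omega)]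
  push_cast [N]
  ring

lemma D7 {s : Finset ℤ} {a b : ℤ} (hsym : ∀ y ∈ s, -y ∈ s) (ha : a ∈ s) (hb : b ∈ s)
    (ha0 : a ≠ 0) (hab : a ≠ b) (hbna : b ≠ -a) :
    F3 s a b (-a) = (N s - 3) + (N s - 3) * (N s - 4) := by
  have hna : -a ∈ s := hsym a ha
  have hsub : ({a, b, -a} : Finset ℤ) ⊆ s := by
    intro y hy
    simp only [Finset.mem_insert, Finset.mem_singleton] at hy
    rcases hy with rfl | rfl | rfl <;> assumption
  have hoff : ∀ d ∈ s, d ∉ ({a, b, -a} : Finset ℤ) →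
      (if -a ≠ -d ∧ a ≠ d ∧ b ≠ d then F4 s a b (-a) d else 0) = N s - 4 := by
    intro d hds hd
    simp only [Finset.mem_insert, Finset.mem_singleton, not_or] at hd
    obtain ⟨hd1, hd2, hd3⟩ := hd
    rw [if_pos (by omega), F4_eq ha hb hna hds,
      card4 (by omega) (by omega) (by omega) (by omega) (by omega) (by omega)]
    norm_num
  rw [F3, sum_split s _ _ (N s - 4) hsub hoff,
    Finset.sum_insert (by simp only [Finset.mem_insert, Finset.mem_singleton]; omega),
    Finset.sum_insert (by simp only [Finset.mem_singleton]; omega), Finset.sum_singleton,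
    if_neg (by omega), if_neg (by omega), if_pos (by omega), F4_eq ha hb hna hna,
    show ({a, b, -a, -a} : Finset ℤ) = {a, b, -a} from by
      ext y; simp only [Finset.mem_insert, Finset.mem_singleton]; tauto,
    card3 (by omega) (by omega) (by omega)]
  push_cast [N]
  ring

lemma D8 {s : Finset ℤ} {a b : ℤ} (hsym : ∀ y ∈ s, -y ∈ s) (ha : a ∈ s) (hb : b ∈ s)
    (hb0 : b ≠ 0) (hab : a ≠ b) (hanb : a ≠ -b) :
    F3 s a b (-b) = (N s - 3) + (N s - 3) * (N s - 4) := by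
  have hnb : -b ∈ s := hsym b hb
  have hsub : ({a, b, -b} : Finset ℤ) ⊆ s := by
    intro y hy
    simp only [Finset.mem_insert, Finset.mem_singleton] at hy
    rcases hy with rfl | rfl | rfl <;> assumption
  have hoff : ∀ d ∈ s, d ∉ ({a, b, -b} : Finset ℤ) →
      (if -b ≠ -d ∧ a ≠ d ∧ b ≠ d then F4 s a b (-b) d else 0) = N s - 4 := by
    intro d hds hd
    simp only [Finset.mem_insert, Finset.mem_singleton, not_or] at hd
    obtain ⟨hd1, hd2, hd3⟩ := hd
    rw [if_pos (by omega), F4_eq ha hb hnb hds,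
      card4 (by omega) (by omega) (by omega) (by omega) (by omega) (by omega)]
    norm_num
  rw [F3, sum_split s _ _ (N s - 4) hsub hoff,
    Finset.sum_insert (by simp only [Finset.mem_insert, Finset.mem_singleton]; omega),
    Finset.sum_insert (by simp only [Finset.mem_singleton]; omega), Finset.sum_singleton,
    if_neg (by omega), if_neg (by omega), if_pos (by omega), F4_eq ha hb hnb hnb,
    show ({a, b, -b, -b} : Finset ℤ) = {a, b, -b} from by
      ext y; simp only [Finset.mem_insert, Finset.mem_singleton]; tauto,
    card3 (by omega) (by omega) (by omega)]
  push_cast [N]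
  ring

lemma D9 {s : Finset ℤ} {a b c : ℤ} (hsym : ∀ y ∈ s, -y ∈ s) (ha : a ∈ s) (hb : b ∈ s)
    (hc : c ∈ s) (hc0 : c ≠ 0) (hab : a ≠ b) (hca : c ≠ a) (hcb : c ≠ b)
    (hcna : c ≠ -a) (hcnb : c ≠ -b) :
    F3 s a b c = (N s - 3) + (N s - 4) * (N s - 4) := by
  have hnc : -c ∈ s := hsym c hc
  have hsub : ({a, b, c, -c} : Finset ℤ) ⊆ s := by
    intro y hy
    simp only [Finset.mem_insert, Finset.mem_singleton] at hy
    rcases hy with rfl | rfl | rfl | rfl <;> assumption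
  have hoff : ∀ d ∈ s, d ∉ ({a, b, c, -c} : Finset ℤ) →
      (if c ≠ -d ∧ a ≠ d ∧ b ≠ d then F4 s a b c d else 0) = N s - 4 := by
    intro d hds hd
    simp only [Finset.mem_insert, Finset.mem_singleton, not_or] at hd
    obtain ⟨hd1, hd2, hd3, hd4⟩ := hd
    rw [if_pos (by omega), F4_eq ha hb hc hds,
      card4 (by omega) (by omega) (by omega) (by omega) (by omega) (by omega)]
    norm_num
  rw [F3, sum_split s _ _ (N s - 4) hsub hoff,
    Finset.sum_insert (by simp only [Finset.mem_insert, Finset.mem_singleton]; omega),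
    Finset.sum_insert (by simp only [Finset.mem_insert, Finset.mem_singleton]; omega),
    Finset.sum_insert (by simp only [Finset.mem_singleton]; omega), Finset.sum_singleton,
    if_neg (by omega), if_neg (by omega), if_pos (by omega), if_neg (by omega),
    F4_eq ha hb hc hc,
    show ({a, b, c, c} : Finset ℤ) = {a, b, c} from by
      ext y; simp only [Finset.mem_insert, Finset.mem_singleton]; tauto,
    card3 (by omega) (by omega) (by omega),
    card4 (by omega) (by omega) (by omega) (by omega) (by omega) (by omega)]
  push_cast [N]
  ring

lemma card5' {a b c d e : ℤ} (hab : a ≠ b) (hac : a ≠ c) (had : a ≠ d) (hae : a ≠ e)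
    (hbc : b ≠ c) (hbd : b ≠ d) (hbe : b ≠ e) (hcd : c ≠ d) (hce : c ≠ e) (hde : d ≠ e) :
    ({a, b, c, d, e} : Finset ℤ).card = 5 := by
  rw [Finset.card_insert_of_notMem (by simp [hab, hac, had, hae]),
    card4 hbc hbd hbe hcd hce hde]

lemma CI {s : Finset ℤ} {a : ℤ} (hsym : ∀ x ∈ s, -x ∈ s) (h0 : (0:ℤ) ∈ s)
    (ha : a ∈ s) (ha0 : a ≠ 0) :
    F2 s a a = (N s - 2) * (N s - 3) + (N s - 2) * (N s - 2)
      + (N s - 3) * ((N s - 2) + (N s - 3) * (N s - 3)) := by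
  have hna : -a ∈ s := hsym a ha
  have hsub : ({a, 0, -a} : Finset ℤ) ⊆ s := by
    intro y hy
    simp only [Finset.mem_insert, Finset.mem_singleton] at hy
    rcases hy with rfl | rfl | rfl <;> assumption
  have hoff : ∀ c ∈ s, c ∉ ({a, 0, -a} : Finset ℤ) →
      (if a ≠ c ∧ a ≠ c then F3 s a a c else 0) = (N s - 2) + (N s - 3) * (N s - 3) := by
    intro c hcs hc
    simp only [Finset.mem_insert, Finset.mem_singleton, not_or] at hc
    obtain ⟨hc1, hc2, hc3⟩ := hc
    rw [if_pos (by omega), D3 hsym ha hcs ha0 hc2 hc1 hc3]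
  rw [F2, sum_split s _ _ ((N s - 2) + (N s - 3) * (N s - 3)) hsub hoff,
    Finset.sum_insert (by simp only [Finset.mem_insert, Finset.mem_singleton]; omega),
    Finset.sum_insert (by simp only [Finset.mem_singleton]; omega), Finset.sum_singleton,
    if_neg (by omega), if_pos (by omega), if_pos (by omega),
    D1 h0 ha ha0, D2 hsym ha ha0,
    card3 ha0 (by omega) (by omega)]
  push_cast [N]
  ring

lemma C1 {s : Finset ℤ} {x : ℤ} (hsym : ∀ y ∈ s, -y ∈ s) (h0 : (0:ℤ) ∈ s)
    (hx : x ∈ s) (hx0 : x ≠ 0) :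
    F2 s 0 x = (N s - 3) + (N s - 3) * (N s - 4)
      + (N s - 3) * ((N s - 3) + (N s - 4) * (N s - 4)) := by
  have hnx : -x ∈ s := hsym x hx
  have hsub : ({0, x, -x} : Finset ℤ) ⊆ s := by
    intro y hy
    simp only [Finset.mem_insert, Finset.mem_singleton] at hy
    rcases hy with rfl | rfl | rfl <;> assumption
  have hoff : ∀ c ∈ s, c ∉ ({0, x, -x} : Finset ℤ) →
      (if (0:ℤ) ≠ c ∧ x ≠ c then F3 s 0 x c else 0)
        = (N s - 3) + (N s - 4) * (N s - 4) := by
    intro c hcs hc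
    simp only [Finset.mem_insert, Finset.mem_singleton, not_or] at hc
    obtain ⟨hc1, hc2, hc3⟩ := hc
    rw [if_pos (by omega), D5 hsym h0 hx hcs hx0 hc1 hc2 hc3]
  rw [F2, sum_split s _ _ ((N s - 3) + (N s - 4) * (N s - 4)) hsub hoff,
    Finset.sum_insert (by simp only [Finset.mem_insert, Finset.mem_singleton]; omega),
    Finset.sum_insert (by simp only [Finset.mem_singleton]; omega), Finset.sum_singleton,
    if_neg (by omega), if_neg (by omega), if_pos (by omega),
    D4 hsym h0 hx hx0,
    card3 (by omega) (by omega) (by omega)]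
  push_cast [N]
  ring

lemma C4 {s : Finset ℤ} {a b : ℤ} (hsym : ∀ y ∈ s, -y ∈ s) (h0 : (0:ℤ) ∈ s)
    (ha : a ∈ s) (hb : b ∈ s) (ha0 : a ≠ 0) (hb0 : b ≠ 0) (hab : a ≠ b) (hanb : a ≠ -b) :
    F2 s a b = (N s - 3) * (N s - 4) + ((N s - 3) + (N s - 3) * (N s - 4))
      + ((N s - 3) + (N s - 3) * (N s - 4))
      + (N s - 5) * ((N s - 3) + (N s - 4) * (N s - 4)) := by
  have hna : -a ∈ s := hsym a ha
  have hnb : -b ∈ s := hsym b hb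
  have hsub : ({a, b, 0, -a, -b} : Finset ℤ) ⊆ s := by
    intro y hy
    simp only [Finset.mem_insert, Finset.mem_singleton] at hy
    rcases hy with rfl | rfl | rfl | rfl | rfl <;> assumption
  have hoff : ∀ c ∈ s, c ∉ ({a, b, 0, -a, -b} : Finset ℤ) →
      (if a ≠ c ∧ b ≠ c then F3 s a b c else 0)
        = (N s - 3) + (N s - 4) * (N s - 4) := by
    intro c hcs hc
    simp only [Finset.mem_insert, Finset.mem_singleton, not_or] at hc
    obtain ⟨hc1, hc2, hc3, hc4, hc5⟩ := hc
    rw [if_pos (by omega), D9 hsym ha hb hcs hc3 hab hc1 hc2 hc4 hc5]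
  rw [F2, sum_split s _ _ ((N s - 3) + (N s - 4) * (N s - 4)) hsub hoff,
    Finset.sum_insert (by simp only [Finset.mem_insert, Finset.mem_singleton]; omega),
    Finset.sum_insert (by simp only [Finset.mem_insert, Finset.mem_singleton]; omega),
    Finset.sum_insert (by simp only [Finset.mem_insert, Finset.mem_singleton]; omega),
    Finset.sum_insert (by simp only [Finset.mem_singleton]; omega), Finset.sum_singleton,
    if_neg (by omega), if_neg (by omega), if_pos (by omega), if_pos (by omega),
    if_pos (by omega),
    D6 h0 ha hb ha0 hb0 hab, D7 hsym ha hb ha0 hab (by omega),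
    D8 hsym ha hb hb0 hab hanb,
    card5' hab ha0 (by omega) hanb hb0 (by omega) (by omega) (by omega) (by omega) (by omega)]
  push_cast [N]
  ring

lemma F4_comm (s : Finset ℤ) (a b c d : ℤ) : F4 s a b c d = F4 s b a c d := by
  refine Finset.sum_congr rfl fun e _ => if_congr (by tauto) rfl rfl

lemma F3_comm (s : Finset ℤ) (a b c : ℤ) : F3 s a b c = F3 s b a c := by
  refine Finset.sum_congr rfl fun d _ => ?_
  rw [F4_comm s a b]
  exact if_congr (by tauto) rfl rfl

lemma F2_comm (s : Finset ℤ) (a b : ℤ) : F2 s a b = F2 s b a := by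
  refine Finset.sum_congr rfl fun c _ => ?_
  rw [F3_comm s a b]
  exact if_congr (by tauto) rfl rfl

lemma B0 {s : Finset ℤ} (hsym : ∀ y ∈ s, -y ∈ s) (h0 : (0:ℤ) ∈ s) :
    F1 s 0 = (N s - 1) * ((N s - 3) + (N s - 3) * (N s - 4)
      + (N s - 3) * ((N s - 3) + (N s - 4) * (N s - 4))) := by
  have hsub : ({0} : Finset ℤ) ⊆ s := by
    intro y hy
    simp only [Finset.mem_singleton] at hy
    subst hy; exact h0
  have hoff : ∀ b ∈ s, b ∉ ({0} : Finset ℤ) →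
      (if (0:ℤ) ≠ -b then F2 s 0 b else 0)
        = (N s - 3) + (N s - 3) * (N s - 4)
          + (N s - 3) * ((N s - 3) + (N s - 4) * (N s - 4)) := by
    intro b hbs hb
    simp only [Finset.mem_singleton] at hb
    rw [if_pos (by omega), C1 hsym h0 hbs hb]
  rw [F1, sum_split s _ _ _ hsub hoff, Finset.sum_singleton, if_neg (by omega),
    Finset.card_singleton]
  push_cast [N]
  ring

lemma Ba {s : Finset ℤ} {a : ℤ} (hsym : ∀ y ∈ s, -y ∈ s) (h0 : (0:ℤ) ∈ s)
    (ha : a ∈ s) (ha0 : a ≠ 0) :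
    F1 s a = ((N s - 2) * (N s - 3) + (N s - 2) * (N s - 2)
        + (N s - 3) * ((N s - 2) + (N s - 3) * (N s - 3)))
      + ((N s - 3) + (N s - 3) * (N s - 4)
        + (N s - 3) * ((N s - 3) + (N s - 4) * (N s - 4)))
      + (N s - 3) * ((N s - 3) * (N s - 4) + ((N s - 3) + (N s - 3) * (N s - 4))
        + ((N s - 3) + (N s - 3) * (N s - 4))
        + (N s - 5) * ((N s - 3) + (N s - 4) * (N s - 4))) := by
  have hna : -a ∈ s := hsym a ha
  have hsub : ({-a, a, 0} : Finset ℤ) ⊆ s := by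
    intro y hy
    simp only [Finset.mem_insert, Finset.mem_singleton] at hy
    rcases hy with rfl | rfl | rfl <;> assumption
  have hoff : ∀ b ∈ s, b ∉ ({-a, a, 0} : Finset ℤ) →
      (if a ≠ -b then F2 s a b else 0)
        = (N s - 3) * (N s - 4) + ((N s - 3) + (N s - 3) * (N s - 4))
          + ((N s - 3) + (N s - 3) * (N s - 4))
          + (N s - 5) * ((N s - 3) + (N s - 4) * (N s - 4)) := by
    intro b hbs hb
    simp only [Finset.mem_insert, Finset.mem_singleton, not_or] at hb
    obtain ⟨hb1, hb2, hb3⟩ := hb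
    rw [if_pos (by omega), C4 hsym h0 ha hbs ha0 hb3 (by omega) (by omega)]
  rw [F1, sum_split s _ _ _ hsub hoff,
    Finset.sum_insert (by simp only [Finset.mem_insert, Finset.mem_singleton]; omega),
    Finset.sum_insert (by simp only [Finset.mem_singleton]; omega), Finset.sum_singleton,
    if_neg (by omega), if_pos (by omega), if_pos (by omega),
    CI hsym h0 ha ha0, F2_comm s a 0, C1 hsym h0 ha ha0,
    card3 (by omega) (by omega) ha0]
  push_cast [N]
  ring

lemma A0 {s : Finset ℤ} (hsym : ∀ y ∈ s, -y ∈ s) (h0 : (0:ℤ) ∈ s) :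
    F0 s = (N s - 1) * ((N s - 3) + (N s - 3) * (N s - 4)
        + (N s - 3) * ((N s - 3) + (N s - 4) * (N s - 4)))
      + (N s - 1) * (((N s - 2) * (N s - 3) + (N s - 2) * (N s - 2)
        + (N s - 3) * ((N s - 2) + (N s - 3) * (N s - 3)))
      + ((N s - 3) + (N s - 3) * (N s - 4)
        + (N s - 3) * ((N s - 3) + (N s - 4) * (N s - 4)))
      + (N s - 3) * ((N s - 3) * (N s - 4) + ((N s - 3) + (N s - 3) * (N s - 4))
        + ((N s - 3) + (N s - 3) * (N s - 4))
        + (N s - 5) * ((N s - 3) + (N s - 4) * (N s - 4)))) := by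
  have hsub : ({0} : Finset ℤ) ⊆ s := by
    intro y hy
    simp only [Finset.mem_singleton] at hy
    subst hy; exact h0
  have hoff : ∀ a ∈ s, a ∉ ({0} : Finset ℤ) →
      F1 s a = ((N s - 2) * (N s - 3) + (N s - 2) * (N s - 2)
        + (N s - 3) * ((N s - 2) + (N s - 3) * (N s - 3)))
      + ((N s - 3) + (N s - 3) * (N s - 4)
        + (N s - 3) * ((N s - 3) + (N s - 4) * (N s - 4)))
      + (N s - 3) * ((N s - 3) * (N s - 4) + ((N s - 3) + (N s - 3) * (N s - 4))
        + ((N s - 3) + (N s - 3) * (N s - 4))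
        + (N s - 5) * ((N s - 3) + (N s - 4) * (N s - 4))) := by
    intro a has ha
    simp only [Finset.mem_singleton] at ha
    exact Ba hsym h0 has ha
  rw [F0, sum_split s _ _ _ hsub hoff, Finset.sum_singleton, B0 hsym h0,
    Finset.card_singleton]
  push_cast [N]
  ring

lemma sum_piFinset5 (s : Finset ℤ) (F : ℤ → ℤ → ℤ → ℤ → ℤ → ℤ) :
    ∑ x ∈ Fintype.piFinset (fun _ : Fin 5 => s), F (x 0) (x 1) (x 2) (x 3) (x 4)
      = ∑ a ∈ s, ∑ b ∈ s, ∑ c ∈ s, ∑ d ∈ s, ∑ e ∈ s, F a b c d e := by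
  have h : ∑ a ∈ s, ∑ b ∈ s, ∑ c ∈ s, ∑ d ∈ s, ∑ e ∈ s, F a b c d e
      = ∑ p ∈ s ×ˢ (s ×ˢ (s ×ˢ (s ×ˢ s))), F p.1 p.2.1 p.2.2.1 p.2.2.2.1 p.2.2.2.2 := by
    rw [Finset.sum_product]
    refine Finset.sum_congr rfl fun a _ => ?_
    rw [Finset.sum_product]
    refine Finset.sum_congr rfl fun b _ => ?_
    rw [Finset.sum_product]
    refine Finset.sum_congr rfl fun c _ => ?_
    rw [Finset.sum_product]
  rw [h]
  refine Finset.sum_nbij' (fun x => (x 0, x 1, x 2, x 3, x 4))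
    (fun p => ![p.1, p.2.1, p.2.2.1, p.2.2.2.1, p.2.2.2.2]) ?_ ?_ ?_ ?_ ?_
  · intro x hx
    simp only [Fintype.mem_piFinset] at hx
    simp [Finset.mem_product, hx]
  · intro p hp
    simp only [Finset.mem_product] at hp
    simp only [Fintype.mem_piFinset]
    intro i
    fin_cases i <;> simp [hp.1, hp.2.1, hp.2.2.1, hp.2.2.2.1, hp.2.2.2.2]
  · intro x _
    funext i
    fin_cases i <;> rfl
  · intro p _
    rfl
  · intro x _
    rfl

lemma nested_eq (s : Finset ℤ) :
    (∑ a ∈ s, ∑ b ∈ s, ∑ c ∈ s, ∑ d ∈ s, ∑ e ∈ s,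
      if a ≠ -b ∧ a ≠ c ∧ a ≠ d ∧ a ≠ e ∧ b ≠ c ∧ b ≠ d ∧ b ≠ e ∧ c ≠ -d ∧ c ≠ e ∧ d ≠ e
      then (1:ℤ) else 0) = F0 s := by
  unfold F0 F1 F2 F3 F4
  refine Finset.sum_congr rfl fun a _ => ?_
  refine Finset.sum_congr rfl fun b _ => ?_
  by_cases h1 : a ≠ -b
  · rw [if_pos h1]
    refine Finset.sum_congr rfl fun c _ => ?_
    by_cases h2 : a ≠ c ∧ b ≠ c
    · rw [if_pos h2]
      refine Finset.sum_congr rfl fun d _ => ?_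
      by_cases h3 : c ≠ -d ∧ a ≠ d ∧ b ≠ d
      · rw [if_pos h3]
        exact Finset.sum_congr rfl fun e _ => if_congr (by tauto) rfl rfl
      · rw [if_neg h3]
        exact Finset.sum_eq_zero fun e _ => if_neg (by tauto)
    · rw [if_neg h2]
      exact Finset.sum_eq_zero fun d _ => Finset.sum_eq_zero fun e _ => if_neg (by tauto)
  · rw [if_neg h1]
    exact Finset.sum_eq_zero fun c _ => Finset.sum_eq_zero fun d _ =>
      Finset.sum_eq_zero fun e _ => if_neg (by tauto)

theorem chromatic_K5_3 (k : ℕ) :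
    (((Fintype.piFinset fun _ : Fin 5 => Finset.Icc (-(k : ℤ)) (k : ℤ)).filter
        fun x : Fin 5 → ℤ => ∀ e ∈ completeEdges, x e.1 ≠ sign e * x e.2).card : ℤ)
      = 32 * (k : ℤ)^5 - 80 * (k : ℤ)^4 + 88 * (k : ℤ)^3 - 48 * (k : ℤ)^2 + 10 * (k : ℤ) := by
  set s : Finset ℤ := Finset.Icc (-(k:ℤ)) (k:ℤ) with hs
  have h0 : (0:ℤ) ∈ s := by rw [hs, Finset.mem_Icc]; omega
  have hsym : ∀ y ∈ s, -y ∈ s := by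
    intro y hy
    rw [hs, Finset.mem_Icc] at hy ⊢
    omega
  have hN : N s = 2*(k:ℤ)+1 := by
    rw [N, hs, Int.card_Icc]
    omega
  have hpred : ∀ x : Fin 5 → ℤ, ((∀ e ∈ completeEdges, x e.1 ≠ sign e * x e.2) ↔
      (x 0 ≠ -x 1 ∧ x 0 ≠ x 2 ∧ x 0 ≠ x 3 ∧ x 0 ≠ x 4 ∧ x 1 ≠ x 2 ∧ x 1 ≠ x 3 ∧ x 1 ≠ x 4 ∧
        x 2 ≠ -x 3 ∧ x 2 ≠ x 4 ∧ x 3 ≠ x 4)) := by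
    intro x
    simp [completeEdges, sign, negEdges]
  rw [Finset.filter_congr (fun x _ => hpred x), Finset.card_filter]
  push_cast
  have key : (∑ x ∈ Fintype.piFinset (fun _ : Fin 5 => s),
      if (x 0 ≠ -x 1 ∧ x 0 ≠ x 2 ∧ x 0 ≠ x 3 ∧ x 0 ≠ x 4 ∧ x 1 ≠ x 2 ∧ x 1 ≠ x 3 ∧ x 1 ≠ x 4 ∧
        x 2 ≠ -x 3 ∧ x 2 ≠ x 4 ∧ x 3 ≠ x 4) then (1:ℤ) else 0) = F0 s :=
    (sum_piFinset5 s fun a b c d e =>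
      if (a ≠ -b ∧ a ≠ c ∧ a ≠ d ∧ a ≠ e ∧ b ≠ c ∧ b ≠ d ∧ b ≠ e ∧ c ≠ -d ∧ c ≠ e ∧ d ≠ e)
      then (1:ℤ) else 0).trans (nested_eq s)
  rw [key, A0 hsym h0, hN]
  ring
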